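/- Let X be an n×d real matrix, M₂ a non-singular positive semi-definite n×n diagonal matrix with 𝕏̂ = XᵀM₂X, and Σ_D a positive semi-definite n×n matrix. Define the linear operator on d×d matrices S^lin_α(A) = (I − α𝕏̂)A(I − α𝕏̂) + α² · Xᵀ(Σ_D ⊙ (XAXᵀ))X. Fix a symmetric d×d matrix A with ker(X) ⊆ ker(A) and suppose 0 < α < min{1/‖𝕏̂‖, σ⁺min(𝕏̂)/(σ⁺min(𝕏̂)² + ‖X‖⁴·‖Σ_D‖)}. Then ‖S^lin_α(A)‖ ≤ (1 − α·σ⁺min(𝕏̂)) · ‖A‖ in spectral norm. -/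

import Mathlib

open Matrix MeasureTheory ProbabilityTheory Filter
open scoped BigOperators

noncomputable section

/-- Euclidean norm of a vector in `Fin n → ℝ`. -/
def l2norm {n : ℕ} (v : Fin n → ℝ) : ℝ := Real.sqrt (∑ i, (v i) ^ 2)

/-- Spectral norm (ℓ²-operator norm) of a real matrix. -/
def specNorm {m n : ℕ} (A : Matrix (Fin m) (Fin n) ℝ) : ℝ :=
  sSup {c : ℝ | ∃ v : Fin n → ℝ, l2norm v = 1 ∧ c = l2norm (A *ᵥ v)}

/-- The smallest non-zero singular value of a real matrix:
the infimum of all positive `s` such that `s ^ 2` is an eigenvalue of `AᵀA`. -/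
def sigmaMinPos {m n : ℕ} (A : Matrix (Fin m) (Fin n) ℝ) : ℝ :=
  sInf {s : ℝ | 0 < s ∧ ∃ v : Fin n → ℝ, v ≠ 0 ∧ (Aᵀ * A) *ᵥ v = (s ^ 2) • v}

/-- `B` is the Moore–Penrose pseudo-inverse of `A` (the four Penrose conditions). -/
def IsMoorePenrose {m n : ℕ} (A : Matrix (Fin m) (Fin n) ℝ)
    (B : Matrix (Fin n) (Fin m) ℝ) : Prop :=
  A * B * A = A ∧ B * A * B = B ∧ (A * B)ᵀ = A * B ∧ (B * A)ᵀ = B * A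

/-- `w` lies in the orthogonal complement of `ker A`. -/
def perpKer {m n : ℕ} (A : Matrix (Fin m) (Fin n) ℝ) (w : Fin n → ℝ) : Prop :=
  ∀ v : Fin n → ℝ, A *ᵥ v = 0 → w ⬝ᵥ v = 0

/-- Entrywise expectation of a random matrix. -/
def matExp {Ω : Type*} [MeasurableSpace Ω] (μ : Measure Ω) {m n : ℕ}
    (M : Ω → Matrix (Fin m) (Fin n) ℝ) : Matrix (Fin m) (Fin n) ℝ :=
  Matrix.of fun i j => ∫ ω, M ω i j ∂μ

/-- Entrywise expectation of a random vector. -/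
def vecExp {Ω : Type*} [MeasurableSpace Ω] (μ : Measure Ω) {n : ℕ}
    (v : Ω → Fin n → ℝ) : Fin n → ℝ :=
  fun i => ∫ ω, v ω i ∂μ

open scoped Matrix.Norms.L2Operator

/-!
Since `M₂` is positive definite, `ker 𝕏̂ = ker X ⊆ ker A`. Diagonalise `𝕏̂ = U diag(μ) Uᵀ` and let
`K` be the orthogonal projection onto `ker 𝕏̂`; as `A` is symmetric, `A K = K A = 0`. Hence in
`(I - α𝕏̂) A (I - α𝕏̂)` the factor `I - α𝕏̂` may be replaced by `I - α𝕏̂ - K = U diag(e) Uᵀ`, where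
`e` vanishes on the zero eigenvalues and `e_i = 1 - αμ_i ∈ [0, 1 - ασ⁺min]` on the others, which
bounds the first term by `(1 - ασ⁺min)² ‖A‖`.

For the second term, `‖M‖ I ± M ⪰ 0` and the Schur product theorem give
`± Σ_D ⊙ M ⪯ ‖M‖ diag(Σ_D) ⪯ ‖Σ_D‖ ‖M‖ I`, so `‖Σ_D ⊙ M‖ ≤ ‖Σ_D‖ ‖M‖` and the term is at most
`α² ‖X‖⁴ ‖Σ_D‖ ‖A‖`. The condition `α (σ⁺min² + ‖X‖⁴ ‖Σ_D‖) < σ⁺min` makes the sum at most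
`(1 - ασ⁺min) ‖A‖`.
-/

lemma l2norm_eq_norm_toLp {n : ℕ} (v : Fin n → ℝ) : l2norm v = ‖WithLp.toLp 2 v‖ := by
  simp [l2norm, EuclideanSpace.norm_eq]

lemma specNorm_eq_l2_opNorm {m n : ℕ} (A : Matrix (Fin m) (Fin n) ℝ) : specNorm A = ‖A‖ := by
  rw [l2_opNorm_def, ← ContinuousLinearMap.sSup_sphere_eq_norm, specNorm]
  congr 1
  ext c
  constructor
  · rintro ⟨v, hv, rfl⟩
    exact ⟨WithLp.toLp 2 v, by simpa [l2norm_eq_norm_toLp] using hv, by simp [l2norm_eq_norm_toLp]⟩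
  · rintro ⟨x, hx, rfl⟩
    exact ⟨x.ofLp, by simpa [l2norm_eq_norm_toLp] using hx, by simp [l2norm_eq_norm_toLp]; rfl⟩

namespace Matrix

variable {ι : Type*} [Fintype ι]

lemma dotProduct_self_eq_norm_sq (v : ι → ℝ) : v ⬝ᵥ v = ‖WithLp.toLp 2 v‖ ^ 2 := by
  rw [EuclideanSpace.norm_sq_eq]; simp [dotProduct, sq]

lemma PosDef.mulVec_eq_zero_of_transpose_mul_mul_mulVec_eq_zero {κ : Type*} [Fintype κ]
    {M : Matrix κ κ ℝ} (hM : M.PosDef) {X : Matrix κ ι ℝ} {v : ι → ℝ}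
    (h : (Xᵀ * M * X) *ᵥ v = 0) : X *ᵥ v = 0 := by
  by_contra hXv
  have hpos := hM.dotProduct_mulVec_pos hXv
  have hquad : (X *ᵥ v) ⬝ᵥ M *ᵥ X *ᵥ v = v ⬝ᵥ (Xᵀ * M * X) *ᵥ v := by
    rw [← mulVec_mulVec, ← mulVec_mulVec, dotProduct_mulVec v, vecMul_transpose]
  rw [star_trivial, hquad, h, dotProduct_zero] at hpos
  exact lt_irrefl 0 hpos

variable [DecidableEq ι]

open scoped RealInnerProductSpace in
lemma abs_dotProduct_mulVec_le (A : Matrix ι ι ℝ) (v : ι → ℝ) :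
    |v ⬝ᵥ A *ᵥ v| ≤ ‖A‖ * (v ⬝ᵥ v) := by
  have h := inner_toEuclideanCLM A (WithLp.toLp 2 v) (WithLp.toLp 2 v)
  rw [WithLp.ofLp_toLp] at h
  calc |v ⬝ᵥ A *ᵥ v| ≤ ‖WithLp.toLp 2 v‖ * ‖toEuclideanCLM (𝕜 := ℝ) A (WithLp.toLp 2 v)‖ := by
        rw [← h]; exact abs_real_inner_le_norm _ _
    _ ≤ ‖WithLp.toLp 2 v‖ * (‖A‖ * ‖WithLp.toLp 2 v‖) := by
        gcongr; exact (toEuclideanCLM (𝕜 := ℝ) A).le_opNorm _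
    _ = ‖A‖ * (v ⬝ᵥ v) := by rw [dotProduct_self_eq_norm_sq]; ring

open scoped RealInnerProductSpace in
lemma l2_opNorm_le_of_abs_dotProduct_mulVec_le {A : Matrix ι ι ℝ} (hA : A.IsHermitian) {b : ℝ}
    (hb : 0 ≤ b) (h : ∀ v, |v ⬝ᵥ A *ᵥ v| ≤ b * (v ⬝ᵥ v)) : ‖A‖ ≤ b := by
  rw [← l2_opNorm_toEuclideanCLM, ContinuousLinearMap.norm_eq_iSup_rayleighQuotient _
    (isSymmetric_toEuclideanLin_iff.mpr hA)]
  refine ciSup_le fun x => ?_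
  rcases eq_or_ne x 0 with rfl | hx
  · simpa using hb
  have hq := h x.ofLp
  rw [← inner_toEuclideanCLM, real_inner_comm, dotProduct_self_eq_norm_sq] at hq
  rw [ContinuousLinearMap.rayleighQuotient, ContinuousLinearMap.reApplyInnerSelf_apply, abs_div,
    abs_sq, div_le_iff₀ (by positivity)]
  simpa using hq

lemma abs_diag_le_l2_opNorm (A : Matrix ι ι ℝ) (i : ι) : |A i i| ≤ ‖A‖ := by
  simpa [mulVec_single] using abs_dotProduct_mulVec_le A (Pi.single i 1)

lemma posSemidef_l2_opNorm_smul_one_sub {M : Matrix ι ι ℝ} (hM : M.IsHermitian) :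
    (‖M‖ • 1 - M).PosSemidef := by
  refine .of_dotProduct_mulVec_nonneg ((isHermitian_one.smul (.all _)).sub hM) fun v => ?_
  have := abs_dotProduct_mulVec_le M v
  rw [star_trivial, sub_mulVec, dotProduct_sub, smul_mulVec, one_mulVec, dotProduct_smul,
    smul_eq_mul]
  linarith [le_abs_self (v ⬝ᵥ M *ᵥ v)]

lemma dotProduct_hadamard_mulVec_le {S M : Matrix ι ι ℝ} (hS : S.PosSemidef) (hM : M.IsHermitian)
    (v : ι → ℝ) : v ⬝ᵥ (S ⊙ M) *ᵥ v ≤ ‖S‖ * ‖M‖ * (v ⬝ᵥ v) := by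
  have hschur := (hS.hadamard (posSemidef_l2_opNorm_smul_one_sub hM)).dotProduct_mulVec_nonneg v
  have hsplit : S ⊙ (‖M‖ • 1 - M) = ‖M‖ • diagonal S.diag - S ⊙ M := by
    ext i j; by_cases hij : i = j <;> simp [hadamard_apply, hij, mul_sub, mul_comm]
  rw [hsplit, star_trivial, sub_mulVec, dotProduct_sub, smul_mulVec, dotProduct_smul,
    smul_eq_mul] at hschur
  have hdiag : ‖(diagonal S.diag : Matrix ι ι ℝ)‖ ≤ ‖S‖ := by
    rw [l2_opNorm_diagonal]
    exact (pi_norm_le_iff_of_nonneg (norm_nonneg S)).mpr fun i => abs_diag_le_l2_opNorm S i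
  have hvv : 0 ≤ v ⬝ᵥ v := by rw [dotProduct_self_eq_norm_sq]; positivity
  calc v ⬝ᵥ (S ⊙ M) *ᵥ v ≤ ‖M‖ * (v ⬝ᵥ diagonal S.diag *ᵥ v) := by linarith
    _ ≤ ‖M‖ * (‖S‖ * (v ⬝ᵥ v)) := by
        gcongr
        exact (le_abs_self _).trans ((abs_dotProduct_mulVec_le _ v).trans (by gcongr))
    _ = ‖S‖ * ‖M‖ * (v ⬝ᵥ v) := by ring

lemma l2_opNorm_hadamard_le {S M : Matrix ι ι ℝ} (hS : S.PosSemidef) (hM : M.IsHermitian) :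
    ‖S ⊙ M‖ ≤ ‖S‖ * ‖M‖ := by
  refine l2_opNorm_le_of_abs_dotProduct_mulVec_le (hS.1.hadamard hM) (by positivity) fun v => ?_
  have hneg := dotProduct_hadamard_mulVec_le hS hM.neg v
  rw [show S ⊙ (-M) = -(S ⊙ M) by ext; simp [hadamard_apply], norm_neg, neg_mulVec,
    dotProduct_neg] at hneg
  exact abs_le.mpr ⟨by linarith, dotProduct_hadamard_mulVec_le hS hM v⟩

lemma IsHermitian.dotProduct_self_eigenvectorBasis {A : Matrix ι ι ℝ} (hA : A.IsHermitian)
    (i : ι) : ⇑(hA.eigenvectorBasis i) ⬝ᵥ ⇑(hA.eigenvectorBasis i) = 1 := by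
  rw [dotProduct_self_eq_norm_sq]
  simp [hA.eigenvectorBasis.orthonormal.1 i]

lemma IsHermitian.abs_eigenvalues_le_l2_opNorm {A : Matrix ι ι ℝ} (hA : A.IsHermitian) (i : ι) :
    |hA.eigenvalues i| ≤ ‖A‖ := by
  simpa [hA.mulVec_eigenvectorBasis, hA.dotProduct_self_eigenvectorBasis] using
    abs_dotProduct_mulVec_le A (hA.eigenvectorBasis i)

lemma IsHermitian.one_sub_smul_eq {W : Matrix ι ι ℝ} (hW : W.IsHermitian) (α : ℝ) :
    1 - α • W = (hW.eigenvectorUnitary : Matrix ι ι ℝ) * diagonal (1 - α • hW.eigenvalues)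
      * star (hW.eigenvectorUnitary : Matrix ι ι ℝ) := by
  have hdiag : diagonal (1 - α • hW.eigenvalues) = 1 - α • diagonal hW.eigenvalues := by
    rw [← diagonal_one, ← diagonal_smul]; exact (diagonal_sub _ _).symm
  conv_lhs => rw [hW.spectral_theorem, Unitary.conjStarAlgAut_apply]
  simp [hdiag, mul_sub, sub_mul]

lemma IsHermitian.mul_eigenvectorUnitary_mul_diagonal_eq_zero {W A : Matrix ι ι ℝ}
    (hW : W.IsHermitian) (hker : ∀ v, W *ᵥ v = 0 → A *ᵥ v = 0) {k : ι → ℝ}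
    (hk : ∀ i, hW.eigenvalues i ≠ 0 → k i = 0) :
    A * hW.eigenvectorUnitary * diagonal k = 0 := by
  ext j i
  rw [mul_diagonal, zero_apply]
  by_cases hi : hW.eigenvalues i = 0
  · have hv : W *ᵥ hW.eigenvectorBasis i = 0 := by simp [hW.mulVec_eigenvectorBasis i, hi]
    have hcol := congrFun (hker _ hv) j
    simp only [mulVec, dotProduct, Pi.zero_apply] at hcol
    simp [mul_apply, hcol]
  · simp [hk i hi]

lemma l2_opNorm_one_sub_smul_mul_mul_le {W A : Matrix ι ι ℝ} (hW : W.IsHermitian)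
    (hA : A.IsHermitian) (hker : ∀ v, W *ᵥ v = 0 → A *ᵥ v = 0) {α r : ℝ} (hr : 0 ≤ r)
    (hμ : ∀ i, hW.eigenvalues i ≠ 0 → |1 - α * hW.eigenvalues i| ≤ r) :
    ‖(1 - α • W) * A * (1 - α • W)‖ ≤ r ^ 2 * ‖A‖ := by
  set U := hW.eigenvectorUnitary
  set μ := hW.eigenvalues
  let conj (a : ι → ℝ) : Matrix ι ι ℝ := U * diagonal a * star (U : Matrix ι ι ℝ)
  set e : ι → ℝ := fun i => if μ i = 0 then 0 else 1 - α * μ i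
  -- `conj k` is the orthogonal projection onto `ker W`.
  set k : ι → ℝ := fun i => if μ i = 0 then 1 else 0
  have hsplit : 1 - α • W = conj e + conj k := by
    have hek : 1 - α • μ = e + k := by ext i; by_cases h : μ i = 0 <;> simp [e, k, h]
    rw [hW.one_sub_smul_eq, hek,
      show diagonal (e + k) = diagonal e + diagonal k from (diagonal_add e k).symm, mul_add, add_mul]
  have hAK : A * conj k = 0 := by
    have h := hW.mul_eigenvectorUnitary_mul_diagonal_eq_zero hker (k := k) fun i hi => if_neg hi
    simp only [conj, ← Matrix.mul_assoc, U, h, zero_mul]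
  have hKA : conj k * A = 0 := by
    have hK : (conj k).IsHermitian := by
      simpa [conj, star_eq_conjTranspose] using
        isHermitian_mul_mul_conjTranspose (U : Matrix ι ι ℝ) (isHermitian_diagonal k)
    rw [← hK.eq, ← hA.eq, ← conjTranspose_mul, hAK, conjTranspose_zero]
  have he : ‖conj e‖ ≤ r := by
    simp only [conj]
    rw [← Unitary.coe_star, CStarRing.norm_mul_coe_unitary, CStarRing.norm_coe_unitary_mul,
      l2_opNorm_diagonal]
    refine (pi_norm_le_iff_of_nonneg hr).mpr fun i => ?_
    by_cases hi : μ i = 0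
    · simpa [e, hi] using hr
    · simpa [e, hi] using hμ i hi
  calc ‖(1 - α • W) * A * (1 - α • W)‖ = ‖conj e * A * conj e‖ := by
        rw [hsplit, add_mul, hKA, add_zero, mul_add, Matrix.mul_assoc _ A (conj k), hAK, mul_zero,
          add_zero]
    _ ≤ ‖conj e‖ * ‖A‖ * ‖conj e‖ := norm_mul₃_le
    _ = ‖conj e‖ ^ 2 * ‖A‖ := by ring
    _ ≤ r ^ 2 * ‖A‖ := by gcongr

lemma l2_opNorm_transpose_mul_hadamard_mul_le {κ : Type*} [Fintype κ] [DecidableEq κ]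
    {S : Matrix κ κ ℝ} (hS : S.PosSemidef) {A : Matrix ι ι ℝ} (hA : A.IsHermitian)
    (X : Matrix κ ι ℝ) : ‖Xᵀ * (S ⊙ (X * A * Xᵀ)) * X‖ ≤ ‖X‖ ^ 4 * ‖S‖ * ‖A‖ := by
  have hXt : ‖Xᵀ‖ = ‖X‖ := by
    rw [← conjTranspose_eq_transpose_of_trivial, l2_opNorm_conjTranspose]
  have hXAX : (X * A * Xᵀ).IsHermitian := by
    simpa using isHermitian_mul_mul_conjTranspose X hA
  calc ‖Xᵀ * (S ⊙ (X * A * Xᵀ)) * X‖ ≤ ‖Xᵀ‖ * (‖S‖ * (‖X‖ * ‖A‖ * ‖Xᵀ‖)) * ‖X‖ := by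
        grw [l2_opNorm_mul, l2_opNorm_mul, l2_opNorm_hadamard_le hS hXAX, l2_opNorm_mul,
          l2_opNorm_mul]
    _ = ‖X‖ ^ 4 * ‖S‖ * ‖A‖ := by rw [hXt]; ring

end Matrix

lemma sigmaMinPos_le {m n : ℕ} {A : Matrix (Fin m) (Fin n) ℝ} {s : ℝ} (hs : 0 < s)
    {v : Fin n → ℝ} (hv : v ≠ 0) (h : (Aᵀ * A) *ᵥ v = s ^ 2 • v) : sigmaMinPos A ≤ s :=
  csInf_le ⟨0, fun _ ht => ht.1.le⟩ ⟨hs, v, hv, h⟩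

lemma Matrix.PosSemidef.sigmaMinPos_le_eigenvalues {n : ℕ} {W : Matrix (Fin n) (Fin n) ℝ}
    (hW : W.PosSemidef) {i : Fin n} (hi : hW.1.eigenvalues i ≠ 0) :
    sigmaMinPos W ≤ hW.1.eigenvalues i := by
  have hv : ⇑(hW.1.eigenvectorBasis i) ≠ 0 := fun h0 => by
    simpa [h0] using hW.1.dotProduct_self_eigenvectorBasis i
  refine sigmaMinPos_le ((hW.eigenvalues_nonneg i).lt_of_ne' hi) hv ?_
  rw [← conjTranspose_eq_transpose_of_trivial, hW.1.eq, ← mulVec_mulVec,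
    hW.1.mulVec_eigenvectorBasis, mulVec_smul, hW.1.mulVec_eigenvectorBasis, smul_smul, sq]

theorem randomly_weighted_gd_stmt8_general {n d : ℕ}
    (X : Matrix (Fin n) (Fin d) ℝ)
    (M2 : Matrix (Fin n) (Fin n) ℝ)
    (hM2psd : M2.PosSemidef) (hM2unit : IsUnit M2.det)
    (SD : Matrix (Fin n) (Fin n) ℝ) (hSDpsd : SD.PosSemidef)
    (A : Matrix (Fin d) (Fin d) ℝ) (hAsymm : A.IsSymm)
    (hAker : ∀ v : Fin d → ℝ, X *ᵥ v = 0 → A *ᵥ v = 0)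
    (α : ℝ) (hα0 : 0 < α)
    (hα1 : α * specNorm (Xᵀ * M2 * X) < 1)
    (hα2 : α * (sigmaMinPos (Xᵀ * M2 * X) ^ 2 + specNorm X ^ 4 * specNorm SD)
        < sigmaMinPos (Xᵀ * M2 * X)) :
    specNorm (((1 : Matrix (Fin d) (Fin d) ℝ) - α • (Xᵀ * M2 * X)) * A
          * ((1 : Matrix (Fin d) (Fin d) ℝ) - α • (Xᵀ * M2 * X))
        + α ^ 2 • (Xᵀ * Matrix.hadamard SD (X * A * Xᵀ) * X))
      ≤ (1 - α * sigmaMinPos (Xᵀ * M2 * X)) * specNorm A := by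
  simp only [specNorm_eq_l2_opNorm] at hα1 hα2 ⊢
  set W := Xᵀ * M2 * X
  set σ := sigmaMinPos W
  have hW : W.PosSemidef := by simpa [W] using hM2psd.conjTranspose_mul_mul_same X
  have hA : A.IsHermitian := isHermitian_iff_isSymm.mpr hAsymm
  have hM2 : M2.PosDef := hM2psd.posDef_iff_isUnit.mpr ((isUnit_iff_isUnit_det M2).mpr hM2unit)
  have hker (v) (hv : W *ᵥ v = 0) : A *ᵥ v = 0 :=
    hAker v (hM2.mulVec_eq_zero_of_transpose_mul_mul_mulVec_eq_zero hv)
  have hXS : 0 ≤ ‖X‖ ^ 4 * ‖SD‖ := by positivity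
  have hσ : 0 < σ := by nlinarith
  have hασ : α * σ ≤ 1 := by nlinarith
  have hdrift := l2_opNorm_one_sub_smul_mul_mul_le hW.1 hA hker (sub_nonneg.mpr hασ) fun i hi ↦ by
    have hσμ := hW.sigmaMinPos_le_eigenvalues hi
    have hμW := (le_abs_self _).trans (hW.1.abs_eigenvalues_le_l2_opNorm i)
    rw [abs_of_nonneg (by nlinarith)]
    gcongr
  have hnoise := l2_opNorm_transpose_mul_hadamard_mul_le hSDpsd hA X
  calc _ ≤ ‖(1 - α • W) * A * (1 - α • W)‖ + α ^ 2 * ‖Xᵀ * (SD ⊙ (X * A * Xᵀ)) * X‖ := by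
        grw [norm_add_le, norm_smul, Real.norm_of_nonneg (sq_nonneg α)]
    _ ≤ (1 - α * σ) ^ 2 * ‖A‖ + α ^ 2 * (‖X‖ ^ 4 * ‖SD‖ * ‖A‖) := by grw [hdrift, hnoise]
    _ = (1 - α * σ) * ‖A‖ - α * (σ - α * (σ ^ 2 + ‖X‖ ^ 4 * ‖SD‖)) * ‖A‖ := by ring
    _ ≤ (1 - α * σ) * ‖A‖ :=
        sub_le_self _ (mul_nonneg (mul_nonneg hα0.le (sub_nonneg.mpr hα2.le)) (norm_nonneg A))

/-- Lemma 5: contraction of the linear part `S^lin_α`.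
For a symmetric matrix `A` with `ker X ⊆ ker A` and small enough `α > 0`,
`‖S^lin_α(A)‖ ≤ (1 - α σ⁺min(𝕏̂)) ‖A‖` in spectral norm, where
`S^lin_α(A) = (I-α𝕏̂)A(I-α𝕏̂) + α² Xᵀ(Σ_D ⊙ (XAXᵀ))X` and `𝕏̂ = XᵀM₂X`. -/
theorem randomly_weighted_gd_stmt8 {n d : ℕ}
    (X : Matrix (Fin n) (Fin d) ℝ)
    (M2 : Matrix (Fin n) (Fin n) ℝ)
    (hM2diag : M2.IsDiag) (hM2psd : M2.PosSemidef) (hM2unit : IsUnit M2.det)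
    (SD : Matrix (Fin n) (Fin n) ℝ) (hSDpsd : SD.PosSemidef)
    (A : Matrix (Fin d) (Fin d) ℝ) (hAsymm : A.IsSymm)
    (hAker : ∀ v : Fin d → ℝ, X *ᵥ v = 0 → A *ᵥ v = 0)
    (α : ℝ) (hα0 : 0 < α)
    (hα1 : α * specNorm (Xᵀ * M2 * X) < 1)
    (hα2 : α * (sigmaMinPos (Xᵀ * M2 * X) ^ 2 + specNorm X ^ 4 * specNorm SD)
        < sigmaMinPos (Xᵀ * M2 * X)) :
    specNorm (((1 : Matrix (Fin d) (Fin d) ℝ) - α • (Xᵀ * M2 * X)) * A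
          * ((1 : Matrix (Fin d) (Fin d) ℝ) - α • (Xᵀ * M2 * X))
        + α ^ 2 • (Xᵀ * Matrix.hadamard SD (X * A * Xᵀ) * X))
      ≤ (1 - α * sigmaMinPos (Xᵀ * M2 * X)) * specNorm A :=
  randomly_weighted_gd_stmt8_general X M2 hM2psd hM2unit SD hSDpsd A hAsymm hAker α hα0 hα1 hα2
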